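/- arXiv:2112.07435 — 4 statements merged into one kernel-verified Lean document; each statement's English description precedes it below -/
import Mathlib

section
/- Let K be the unique real solution of x³ = x²/2 + 1. Then there do not exist real numbers A, B, u, v with A ≥ 0 and B > 0 that simultaneously satisfy u > K·v, A + B > K·u, and v + B/2 > K·(A + B). -/
/-- infeasibility of the cyclic deviation system for the root K
of x³ = x²/2 + 1. -/
theorem cycle_infeasible (K A B u v : ℝ) (hK : K ^ 3 = K ^ 2 / 2 + 1)
    (hA : 0 ≤ A) (hB : 0 < B) :
    ¬ (u > K * v ∧ A + B > K * u ∧ v + B / 2 > K * (A + B)) := by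
  rintro ⟨h1, h2, h3⟩
  have hKpos : 0 < K := by nlinarith [sq_nonneg K]
  have hK2 : 0 < K ^ 2 := by positivity
  -- K²·u > K³·v ; K·(A+B) > K²·u ⇒ v + B/2 > K³ v ⇒ B > K² v
  have e1 : K ^ 2 * u > K ^ 2 * (K * v) := by
    exact mul_lt_mul_of_pos_left h1 hK2
  have e2 : K * (A + B) > K * (K * u) := mul_lt_mul_of_pos_left h2 hKpos
  have hBv : B > K ^ 2 * v := by nlinarith
  -- K²(v + B/2) > K³(A+B) ≥ K³ B = (K²/2+1)B ⇒ K² v > B, contradiction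
  have e3 : K ^ 2 * (v + B / 2) > K ^ 2 * (K * (A + B)) :=
    mul_lt_mul_of_pos_left h3 hK2
  nlinarith [mul_nonneg (le_of_lt (pow_pos hKpos 3)) hA]
end

section
/- Let a multi-leader congestion game with an adversary have its resources ordered so that a_1 ≤ a_2 ≤ … ≤ a_m, and let α be a real number with 1 ≤ α ≤ 2. If the game admits an α-approximate pure Nash equilibrium, then it admits an α-approximate pure Nash equilibrium x whose loads are nonincreasing along the resource ordering, i.e., ℓ_1(x) ≥ ℓ_2(x) ≥ … ≥ ℓ_m(x). -/
open Finset

variable {ι : Type*} {m : ℕ}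

/-- The load of resource `r` under strategy profile `x`. -/
def load [Fintype ι] [DecidableEq ι] (x : ι → Fin m) (r : Fin m) : ℕ :=
  (Finset.univ.filter (fun i => x i = r)).card

/-- The maximum load `M(x)`. -/
def maxLoad [Fintype ι] [DecidableEq ι] (x : ι → Fin m) : ℕ :=
  Finset.univ.sup (fun r => load x r)

/-- The number `p(x)` of resources with maximum load. -/
def numMax [Fintype ι] [DecidableEq ι] (x : ι → Fin m) : ℕ :=
  (Finset.univ.filter (fun r => load x r = maxLoad x)).card

/-- The attack term `κ*_r(x)`. -/
noncomputable def kappa [Fintype ι] [DecidableEq ι] (B : ℝ) (x : ι → Fin m) (r : Fin m) : ℝ :=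
  if load x r = maxLoad x then B / (numMax x : ℝ) else 0

/-- The cost `c_r(x)` of resource `r` under profile `x`. -/
noncomputable def rcost [Fintype ι] [DecidableEq ι] (a : Fin m → ℝ) (B : ℝ)
    (x : ι → Fin m) (r : Fin m) : ℝ :=
  a r * (load x r : ℝ) + kappa B x r

/-- The private cost `π_i(x)` of player `i` under profile `x`. -/
noncomputable def pcost [Fintype ι] [DecidableEq ι] (a : Fin m → ℝ) (B : ℝ)
    (x : ι → Fin m) (i : ι) : ℝ :=
  rcost a B x (x i)

/-- `x` is an `α`-approximate pure Nash equilibrium. -/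
def isApproxPNE [Fintype ι] [DecidableEq ι] (a : Fin m → ℝ) (B : ℝ) (α : ℝ)
    (x : ι → Fin m) : Prop :=
  ∀ (i : ι) (r : Fin m), pcost a B x i ≤ α * pcost a B (Function.update x i r) i

/-- `r` is the only resource with maximum load in `x`. -/
def onlyMax [Fintype ι] [DecidableEq ι] (x : ι → Fin m) (r : Fin m) : Prop :=
  load x r = maxLoad x ∧ ∀ s : Fin m, load x s = maxLoad x → s = r

section Basics
variable [Fintype ι] [DecidableEq ι] {B : ℝ}

lemma load_le_maxLoad (x : ι → Fin m) (r : Fin m) : load x r ≤ maxLoad x :=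
  Finset.le_sup (mem_univ r)

lemma maxLoad_eq_load (x : ι → Fin m) (r : Fin m) : ∃ t, maxLoad x = load x t := by
  obtain ⟨t, -, ht⟩ := Finset.exists_mem_eq_sup (univ : Finset (Fin m)) ⟨r, mem_univ r⟩
    (fun t => load x t)
  exact ⟨t, ht⟩

lemma numMax_pos (x : ι → Fin m) (r : Fin m) : 0 < numMax x := by
  obtain ⟨t, ht⟩ := maxLoad_eq_load x r
  refine Finset.card_pos.mpr ⟨t, ?_⟩
  simp [numMax, ht.symm]

lemma kappa_nonneg (hB : 0 < B) (x : ι → Fin m) (r : Fin m) : 0 ≤ kappa B x r := by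
  unfold kappa
  split
  · positivity
  · exact le_rfl

lemma kappa_le_B (hB : 0 < B) (x : ι → Fin m) (r : Fin m) : kappa B x r ≤ B := by
  unfold kappa
  split
  · have hp : (1 : ℝ) ≤ (numMax x : ℝ) := by
      exact_mod_cast numMax_pos x r
    calc B / (numMax x : ℝ) ≤ B / 1 := by
          apply div_le_div_of_nonneg_left hB.le one_pos hp
    _ = B := div_one B
  · exact hB.le

lemma rcost_nonneg (ha0 : ∀ r, 0 ≤ a r) (hB : 0 < B) (x : ι → Fin m) (r : Fin m) :
    0 ≤ rcost a B x r := by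
  unfold rcost
  exact add_nonneg (mul_nonneg (ha0 r) (by positivity)) (kappa_nonneg hB x r)

lemma pcost_nonneg (ha0 : ∀ r, 0 ≤ a r) (hB : 0 < B) (x : ι → Fin m) (i : ι) :
    0 ≤ pcost a B x i := rcost_nonneg ha0 hB x (x i)

lemma load_eq_of_iff {x y : ι → Fin m} {w : Fin m} (h : ∀ j, y j = w ↔ x j = w) :
    load y w = load x w := by
  unfold load
  congr 1
  apply Finset.filter_congr
  intro j _
  simpa using h j

lemma load_update_of_ne {x : ι → Fin m} {i : ι} {v w : Fin m} (h1 : w ≠ v) (h2 : w ≠ x i) :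
    load (Function.update x i v) w = load x w := by
  apply load_eq_of_iff
  intro j
  rcases eq_or_ne j i with rfl | hj
  · simp [Function.update_self, h1.symm, h2.symm]
  · simp [Function.update_of_ne hj]

lemma load_update_target {x : ι → Fin m} {i : ι} {v : Fin m} (h : x i ≠ v) :
    load (Function.update x i v) v = load x v + 1 := by
  unfold load
  have : (univ.filter fun j => Function.update x i v j = v)
      = insert i (univ.filter fun j => x j = v) := by
    ext j
    rcases eq_or_ne j i with rfl | hj
    · simp only [Function.update_self, Finset.mem_insert, Finset.mem_filter, mem_univ, true_and]
      tauto
    · simp [Function.update_of_ne hj, hj]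
  rw [this, Finset.card_insert_of_notMem (by simp [h])]

lemma load_update_self {x : ι → Fin m} {i : ι} {v : Fin m} (h : x i ≠ v) :
    load (Function.update x i v) (x i) + 1 = load x (x i) := by
  unfold load
  have hset : (univ.filter fun j => Function.update x i v j = x i)
      = (univ.filter fun j => x j = x i).erase i := by
    ext j
    rcases eq_or_ne j i with rfl | hj
    · simp only [Function.update_self, Finset.mem_erase, Finset.mem_filter, mem_univ, true_and]
      constructor
      · intro hv
        exact absurd hv.symm h
      · rintro ⟨hne, -⟩
        exact absurd rfl hne
    · simp [Function.update_of_ne hj, hj]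
  have hmem : i ∈ (univ.filter fun j => x j = x i) := by simp
  rw [hset, Finset.card_erase_of_mem hmem]
  have : 1 ≤ (univ.filter fun j => x j = x i).card := Finset.card_pos.mpr ⟨i, hmem⟩
  omega

lemma load_update_self_le {x : ι → Fin m} {i : ι} {v : Fin m} :
    load (Function.update x i v) (x i) ≤ load x (x i) := by
  rcases eq_or_ne (x i) v with h | h
  · rw [← h]
    simp [Function.update_eq_self]
  · have := load_update_self (x := x) (i := i) (v := v) h
    omega

lemma exists_player_of_load_pos {x : ι → Fin m} {s : Fin m} (h : 0 < load x s) :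
    ∃ j, x j = s := by
  obtain ⟨j, hj⟩ := Finset.card_pos.mp h
  exact ⟨j, (Finset.mem_filter.mp hj).2⟩

lemma onlyMax_of_lt {x : ι → Fin m} {s : Fin m} (h : ∀ w, w ≠ s → load x w < load x s) :
    onlyMax x s := by
  have hmax : maxLoad x = load x s := by
    apply le_antisymm
    · apply Finset.sup_le
      intro w _
      rcases eq_or_ne w s with rfl | hw
      · exact le_rfl
      · exact (h w hw).le
    · exact load_le_maxLoad x s
  constructor
  · exact hmax.symm
  · intro t ht
    by_contra hts
    have h2 := h t hts
    rw [hmax] at ht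
    omega

lemma kappa_eq_B_of_onlyMax (hB : 0 < B) {x : ι → Fin m} {s : Fin m} (h : onlyMax x s) :
    kappa B x s = B := by
  have hset : (univ.filter fun r => load x r = maxLoad x) = {s} := by
    ext t
    simp only [Finset.mem_filter, mem_univ, true_and, Finset.mem_singleton]
    exact ⟨fun ht => h.2 t ht, fun ht => ht ▸ h.1⟩
  unfold kappa
  rw [if_pos h.1]
  unfold numMax
  rw [hset]
  simp

end Basics

section Swap
variable [Fintype ι] [DecidableEq ι] {B : ℝ}

lemma load_eq_of_iff' {x y : ι → Fin m} {v w : Fin m} (h : ∀ j, y j = v ↔ x j = w) :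
    load y v = load x w := by
  unfold load
  congr 1
  apply Finset.filter_congr
  intro j _
  simpa using h j

lemma load_comp_swap (x : ι → Fin m) (r s v : Fin m) :
    load (⇑(Equiv.swap r s) ∘ x) v = load x (Equiv.swap r s v) := by
  apply load_eq_of_iff'
  intro j
  simp only [Function.comp_apply]
  rw [Equiv.apply_eq_iff_eq_symm_apply, Equiv.symm_swap]

lemma maxLoad_comp_swap (x : ι → Fin m) (r s : Fin m) :
    maxLoad (⇑(Equiv.swap r s) ∘ x) = maxLoad x := by
  apply le_antisymm
  · apply Finset.sup_le
    intro v _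
    rw [load_comp_swap]
    exact load_le_maxLoad x _
  · apply Finset.sup_le
    intro v _
    have h : load x v = load (⇑(Equiv.swap r s) ∘ x) (Equiv.swap r s v) := by
      rw [load_comp_swap, Equiv.swap_apply_self]
    rw [h]
    exact load_le_maxLoad _ _

lemma numMax_comp_swap (x : ι → Fin m) (r s : Fin m) :
    numMax (⇑(Equiv.swap r s) ∘ x) = numMax x := by
  unfold numMax
  rw [maxLoad_comp_swap]
  apply Finset.card_bij' (fun v _ => Equiv.swap r s v) (fun v _ => Equiv.swap r s v)
  · intro v hv
    simp only [Finset.mem_filter, mem_univ, true_and] at hv ⊢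
    rw [load_comp_swap] at hv
    exact hv
  · intro v hv
    simp only [Finset.mem_filter, mem_univ, true_and] at hv ⊢
    rw [load_comp_swap, Equiv.swap_apply_self]
    exact hv
  · intro v _
    exact Equiv.swap_apply_self r s v
  · intro v _
    exact Equiv.swap_apply_self r s v

lemma kappa_comp_swap (x : ι → Fin m) (r s v : Fin m) :
    kappa B (⇑(Equiv.swap r s) ∘ x) v = kappa B x (Equiv.swap r s v) := by
  unfold kappa
  rw [load_comp_swap, maxLoad_comp_swap, numMax_comp_swap]

lemma update_comp_swap (x : ι → Fin m) (i : ι) (r s u : Fin m) :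
    Function.update (⇑(Equiv.swap r s) ∘ x) i u
      = ⇑(Equiv.swap r s) ∘ Function.update x i (Equiv.swap r s u) := by
  funext j
  rcases eq_or_ne j i with rfl | hj
  · simp [Function.update_self, Equiv.swap_apply_self]
  · simp [Function.update_of_ne hj]

end Swap

section Star
variable [Fintype ι] [DecidableEq ι] {B α : ℝ}

lemma arith_key {B α q : ℝ} (hB : 0 < B) (hα1 : 1 ≤ α) (hα2 : α ≤ 2) (hq : 1 ≤ q) :
    α * (B / q) ≤ B / q + α * (B / (q + 1)) := by
  have hq0 : (0:ℝ) < q := lt_of_lt_of_le one_pos hq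
  have hq1 : (0:ℝ) < q + 1 := by linarith
  have key : ((α - 1) * B) / q ≤ (α * B) / (q + 1) := by
    rw [div_le_div_iff₀ hq0 hq1]
    nlinarith [mul_pos hB hq0, mul_le_mul_of_nonneg_right (show α - 1 ≤ q by linarith) hB.le]
  have e1 : ((α - 1) * B) / q = α * (B / q) - B / q := by ring
  have e2 : (α * B) / (q + 1) = α * (B / (q + 1)) := by ring
  rw [e1, e2] at key
  linarith

lemma star_ineq (x : ι → Fin m) (i j : ι) (u r s : Fin m)
    (hxi : x i = r) (hxj : x j = s) (hur : u ≠ r) (hus : u ≠ s)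
    (hl : load x r < load x s)
    (hB : 0 < B) (hα1 : 1 ≤ α) (hα2 : α ≤ 2) :
    α * kappa B (Function.update x j u) u
      ≤ kappa B x s + α * kappa B (Function.update x i u) u := by
  have hα0 : (0:ℝ) ≤ α := by linarith
  set zj := Function.update x j u with hzj
  set z := Function.update x i u with hz
  have hκs0 : 0 ≤ kappa B x s := kappa_nonneg hB x s
  have hκz0 : 0 ≤ kappa B z u := kappa_nonneg hB z u
  have hκzj0 : 0 ≤ kappa B zj u := kappa_nonneg hB zj u
  by_cases hk : load zj u = maxLoad zj
  case neg =>
    have h0 : kappa B zj u = 0 := by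
      unfold kappa
      rw [if_neg hk]
    rw [h0]
    nlinarith [mul_nonneg hα0 hκz0]
  case pos =>
    have hrs : r ≠ s := by
      intro h
      rw [h] at hl
      omega
    have hxj_ne : x j ≠ u := by rw [hxj]; exact hus.symm
    have hxi_ne : x i ≠ u := by rw [hxi]; exact hur.symm
    set L := load x u + 1 with hL
    have lzj_u : load zj u = L := load_update_target hxj_ne
    have lz_u : load z u = L := load_update_target hxi_ne
    have lzj_s : load zj s + 1 = load x s := by
      have := load_update_self hxj_ne
      rwa [hxj] at this
    have lz_r : load z r + 1 = load x r := by
      have := load_update_self hxi_ne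
      rwa [hxi] at this
    have lzj_w : ∀ w, w ≠ u → w ≠ s → load zj w = load x w := by
      intro w h1 h2
      exact load_update_of_ne h1 (by rw [hxj]; exact h2)
    have lz_w : ∀ w, w ≠ u → w ≠ r → load z w = load x w := by
      intro w h1 h2
      exact load_update_of_ne h1 (by rw [hxi]; exact h2)
    have hmaxzj : maxLoad zj = L := by rw [← hk, lzj_u]
    have hall : ∀ w, load zj w ≤ L := by
      intro w
      rw [← hmaxzj]
      exact load_le_maxLoad zj w
    have hxw : ∀ w, w ≠ u → w ≠ s → load x w ≤ L := by
      intro w h1 h2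
      rw [← lzj_w w h1 h2]
      exact hall w
    have hxr_le : load x r ≤ L := hxw r hur.symm hrs
    have hs_le : load x s ≤ L + 1 := by
      have := hall s
      omega
    have hκzj : kappa B zj u = B / (numMax zj : ℝ) := by
      unfold kappa
      rw [if_pos hk]
    have hpj1 : 1 ≤ numMax zj := numMax_pos zj u
    by_cases hsL : load x s = L + 1
    · -- s is strictly above everything in x: kappa x s = B, and pj ≥ 2
      have honly : onlyMax x s := by
        apply onlyMax_of_lt
        intro w hw
        rcases eq_or_ne w u with hequ | hwu
        · subst hequ
          omega
        · have := hxw w hwu hw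
          omega
      have hκs : kappa B x s = B := kappa_eq_B_of_onlyMax hB honly
      have hpj2 : 2 ≤ numMax zj := by
        have hsub : ({u, s} : Finset (Fin m)) ⊆
            (univ.filter fun w => load zj w = maxLoad zj) := by
          intro w hw
          simp only [Finset.mem_insert, Finset.mem_singleton] at hw
          simp only [Finset.mem_filter, mem_univ, true_and]
          rcases hw with rfl | rfl
          · exact hk
          · rw [hmaxzj]
            omega
        have := Finset.card_le_card hsub
        rwa [Finset.card_insert_of_notMem (by simp [hus]), Finset.card_singleton] at this
      have hκzj_le : kappa B zj u ≤ B / 2 := by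
        rw [hκzj]
        apply div_le_div_of_nonneg_left hB.le two_pos
        exact_mod_cast hpj2
      rw [hκs]
      nlinarith [mul_nonneg hα0 hκz0]
    · -- load x s ≤ L
      have hs_le' : load x s ≤ L := by omega
      have hmaxz : maxLoad z = L := by
        apply le_antisymm
        · apply Finset.sup_le
          intro w _
          rcases eq_or_ne w u with hequ | hwu
          · subst hequ
            omega
          rcases eq_or_ne w r with heqr | hwr
          · subst heqr
            omega
          rcases eq_or_ne w s with heqs | hws
          · subst heqs
            rw [lz_w w (Ne.symm hus) (Ne.symm hrs)]
            exact hs_le'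
          · rw [lz_w w hwu hwr]
            exact hxw w hwu hws
        · rw [← lz_u]
          exact load_le_maxLoad z u
      have hkz : load z u = maxLoad z := by rw [lz_u, hmaxz]
      have hκz : kappa B z u = B / (numMax z : ℝ) := by
        unfold kappa
        rw [if_pos hkz]
      by_cases hsL2 : load x s = L
      · -- p_i = p_j + 1 and kappa x s = B / p_j
        have hFz : (univ.filter fun w => load z w = maxLoad z)
            = insert s (univ.filter fun w => load zj w = maxLoad zj) := by
          ext w
          simp only [Finset.mem_insert, Finset.mem_filter, mem_univ, true_and, hmaxz, hmaxzj]
          rcases eq_or_ne w u with hequ | hwu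
          · subst hequ
            simp [lzj_u, lz_u]
          rcases eq_or_ne w s with heqs | hws
          · subst heqs
            rw [lz_w w (Ne.symm hus) (Ne.symm hrs)]
            simp [hsL2]
          rcases eq_or_ne w r with heqr | hwr
          · subst heqr
            rw [lzj_w w (Ne.symm hur) hrs]
            have h1 : load z w + 1 = load x w := lz_r
            constructor
            · intro h; omega
            · rintro (h | h)
              · exact absurd h hrs
              · omega
          · rw [lz_w w hwu hwr, lzj_w w hwu hws]
            simp [hws]
        have hsnot : s ∉ (univ.filter fun w => load zj w = maxLoad zj) := by
          simp only [Finset.mem_filter, mem_univ, true_and, hmaxzj]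
          omega
        have hnumz : numMax z = numMax zj + 1 := by
          unfold numMax
          rw [hFz, Finset.card_insert_of_notMem hsnot]
        -- maxLoad x = L and numMax x = numMax zj
        have hmaxx : maxLoad x = L := by
          apply le_antisymm
          · apply Finset.sup_le
            intro w _
            rcases eq_or_ne w u with hequ | hwu
            · subst hequ
              omega
            rcases eq_or_ne w s with heqs | hws
            · subst heqs
              exact hs_le'
            · exact hxw w hwu hws
          · rw [← hsL2]
            exact load_le_maxLoad x s
        have hFzj : (univ.filter fun w => load zj w = maxLoad zj)
            = insert u ((univ.filter fun w => load x w = maxLoad x).erase s) := by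
          ext w
          simp only [Finset.mem_insert, Finset.mem_erase, Finset.mem_filter, mem_univ,
            true_and, hmaxzj, hmaxx]
          rcases eq_or_ne w u with hequ | hwu
          · subst hequ
            simp [lzj_u]
          rcases eq_or_ne w s with heqs | hws
          · subst heqs
            constructor
            · intro h; omega
            · rintro (h | ⟨h, -⟩)
              · exact absurd h hus.symm
              · exact absurd rfl h
          · rw [lzj_w w hwu hws]
            simp [hwu, hws]
        have hunot : u ∉ (univ.filter fun w => load x w = maxLoad x).erase s := by
          simp only [Finset.mem_erase, Finset.mem_filter, mem_univ, true_and, hmaxx]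
          omega
        have hsmem : s ∈ (univ.filter fun w => load x w = maxLoad x) := by
          simp only [Finset.mem_filter, mem_univ, true_and, hmaxx]
          exact hsL2
        have hnumx : numMax x = numMax zj := by
          unfold numMax
          rw [hFzj, Finset.card_insert_of_notMem hunot, Finset.card_erase_of_mem hsmem]
          have : 1 ≤ (univ.filter fun w => load x w = maxLoad x).card :=
            Finset.card_pos.mpr ⟨s, hsmem⟩
          omega
        have hκs : kappa B x s = B / (numMax zj : ℝ) := by
          unfold kappa
          rw [if_pos (by rw [hmaxx]; exact hsL2), hnumx]
        rw [hκs, hκzj, hκz, hnumz]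
        have hcast : ((numMax zj + 1 : ℕ) : ℝ) = (numMax zj : ℝ) + 1 := by push_cast; ring
        rw [hcast]
        exact arith_key hB hα1 hα2 (by exact_mod_cast hpj1)
      · -- load x s < L : the two filters coincide
        have hs_lt : load x s < L := by omega
        have hFz : (univ.filter fun w => load z w = maxLoad z)
            = (univ.filter fun w => load zj w = maxLoad zj) := by
          ext w
          simp only [Finset.mem_filter, mem_univ, true_and, hmaxz, hmaxzj]
          rcases eq_or_ne w u with hequ | hwu
          · subst hequ
            simp [lzj_u, lz_u]
          rcases eq_or_ne w s with heqs | hws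
          · subst heqs
            rw [lz_w w (Ne.symm hus) (Ne.symm hrs)]
            omega
          rcases eq_or_ne w r with heqr | hwr
          · subst heqr
            rw [lzj_w w (Ne.symm hur) hrs]
            omega
          · rw [lz_w w hwu hwr, lzj_w w hwu hws]
        have hnum : numMax z = numMax zj := by
          unfold numMax
          rw [hFz]
        rw [hκzj, hκz, hnum]
        nlinarith [div_nonneg hB.le (by positivity : (0:ℝ) ≤ (numMax zj : ℝ))]
end Star

section Main
variable [Fintype ι] [DecidableEq ι] {B α : ℝ} {a : Fin m → ℝ}

lemma kappa_update_le (hB : 0 < B) (w z : ι → Fin m) (r s : Fin m)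
    (hle : ∀ w', w' ≠ s → load z w' ≤ load w w')
    (hgt : load w r < load z s) :
    kappa B w r ≤ kappa B z s := by
  by_cases hk : load w r = maxLoad w
  · have honly : onlyMax z s := by
      apply onlyMax_of_lt
      intro w' hw'
      calc load z w' ≤ load w w' := hle w' hw'
      _ ≤ maxLoad w := load_le_maxLoad w w'
      _ = load w r := hk.symm
      _ < load z s := hgt
    rw [kappa_eq_B_of_onlyMax hB honly]
    exact kappa_le_B hB w r
  · unfold kappa
    rw [if_neg hk]
    exact kappa_nonneg hB z s

lemma pcost_comp_swap (x : ι → Fin m) (i : ι) (r s : Fin m) :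
    pcost a B (⇑(Equiv.swap r s) ∘ x) i
      = a (Equiv.swap r s (x i)) * (load x (x i) : ℝ) + kappa B x (x i) := by
  unfold pcost rcost
  rw [Function.comp_apply, load_comp_swap, Equiv.swap_apply_self, kappa_comp_swap,
    Equiv.swap_apply_self]

lemma pcost_update_eq (x : ι → Fin m) (i : ι) (v : Fin m) :
    pcost a B (Function.update x i v) i
      = a v * (load (Function.update x i v) v : ℝ) + kappa B (Function.update x i v) v := by
  unfold pcost rcost
  rw [Function.update_self]

lemma pcost_update_comp_swap (x : ι → Fin m) (i : ι) (r s u : Fin m) :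
    pcost a B (Function.update (⇑(Equiv.swap r s) ∘ x) i u) i
      = a u * (load (Function.update x i (Equiv.swap r s u)) (Equiv.swap r s u) : ℝ)
        + kappa B (Function.update x i (Equiv.swap r s u)) (Equiv.swap r s u) := by
  rw [update_comp_swap]
  have hyi : (⇑(Equiv.swap r s) ∘ Function.update x i (Equiv.swap r s u)) i = u := by
    simp [Function.update_self, Equiv.swap_apply_self]
  unfold pcost rcost
  rw [hyi, load_comp_swap, kappa_comp_swap]

lemma swap_isApproxPNE (ha0 : ∀ t, 0 ≤ a t) (hB : 0 < B) (hα1 : 1 ≤ α) (hα2 : α ≤ 2)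
    (x : ι → Fin m) (hx : isApproxPNE a B α x) (r s : Fin m) (hars : a r ≤ a s)
    (hl : load x r < load x s) :
    isApproxPNE a B α (⇑(Equiv.swap r s) ∘ x) := by
  have hα0 : (0:ℝ) ≤ α := by linarith
  have hrs : r ≠ s := by
    intro h
    rw [h] at hl
    omega
  have hκr : kappa B x r = 0 := by
    unfold kappa
    rw [if_neg]
    intro h
    have := load_le_maxLoad x s
    omega
  obtain ⟨j, hxj⟩ : ∃ j, x j = s :=
    exists_player_of_load_pos (lt_of_le_of_lt (Nat.zero_le _) hl)
  intro i u
  rw [pcost_comp_swap, pcost_update_comp_swap]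
  have hcast : ∀ k : ℕ, ((k + 1 : ℕ) : ℝ) = (k : ℝ) + 1 := by
    intro k; push_cast; ring
  by_cases htriv : Equiv.swap r s u = x i
  · -- deviating to one's own (swapped) resource
    rw [htriv, Function.update_eq_self]
    have hu : u = Equiv.swap r s (x i) := by
      rw [← htriv, Equiv.swap_apply_self]
    rw [← hu]  -- now LHS and inner RHS agree
    have hX : 0 ≤ a u * ((load x (x i) : ℕ) : ℝ) + kappa B x (x i) :=
      add_nonneg (mul_nonneg (ha0 u) (by positivity)) (kappa_nonneg hB x (x i))
    nlinarith
  · -- real deviation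
    have hxis_aux : pcost a B x i = a (x i) * ((load x (x i) : ℕ) : ℝ) + kappa B x (x i) := rfl
    by_cases hur : u = r
    · -- target u = r, i.e. deviation to resource s in the unswapped world
      rw [hur, Equiv.swap_apply_left] at htriv ⊢
      have hxis : x i ≠ s := Ne.symm htriv
      set z' := Function.update x i s with hz'
      have hz's : load z' s = load x s + 1 := load_update_target hxis
      -- kappa comparison will be used in both subcases
      by_cases hxir : x i = r
      · -- case A1 : player moves from r
        have hxj_ne_r : x j ≠ r := by rw [hxj]; exact hrs.symm
        set w := Function.update x j r with hw
        have hwr : load w r = load x r + 1 := load_update_target hxj_ne_r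
        have hκcomp : kappa B w r ≤ kappa B z' s := by
          apply kappa_update_le hB
          · intro w' hw's
            rcases eq_or_ne w' r with rfl | hw'r
            · rw [hwr]
              have := load_update_self_le (x := x) (i := i) (v := s)
              rw [← hz', hxir] at this
              omega
            · rw [load_update_of_ne hw'r (by rw [hxj]; exact hw's)]
              rw [load_update_of_ne hw's (by rw [hxir]; exact hw'r)]
          · rw [hwr, hz's]
            omega
        have hdev := hx j r
        rw [pcost_update_eq, ← hw, hwr] at hdev
        have hpj : pcost a B x j = a s * ((load x s : ℕ) : ℝ) + kappa B x s := by
          unfold pcost rcost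
          rw [hxj]
        rw [hpj, hcast] at hdev
        -- goal
        rw [hxir, Equiv.swap_apply_left, hκr, hz's, hcast]
        have c1 : ((load x r : ℕ) : ℝ) ≤ ((load x s : ℕ) : ℝ) := by exact_mod_cast hl.le
        have c2 : a s * ((load x r : ℕ) : ℝ) ≤ a s * ((load x s : ℕ) : ℝ) :=
          mul_le_mul_of_nonneg_left c1 (ha0 s)
        have c3 : 0 ≤ kappa B x s := kappa_nonneg hB x s
        have c5 : a r * (((load x r : ℕ) : ℝ) + 1) ≤ a r * (((load x s : ℕ) : ℝ) + 1) :=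
          mul_le_mul_of_nonneg_left (by linarith) (ha0 r)
        have c6 : α * (a r * (((load x r : ℕ) : ℝ) + 1) + kappa B w r)
            ≤ α * (a r * (((load x s : ℕ) : ℝ) + 1) + kappa B z' s) :=
          mul_le_mul_of_nonneg_left (add_le_add c5 hκcomp) hα0
        linarith
      · -- case C2 : player sits on neither r nor s
        have hxw : Equiv.swap r s (x i) = x i :=
          Equiv.swap_apply_of_ne_of_ne hxir hxis
        rw [hxw]
        set w := Function.update x i r with hw
        have hwr : load w r = load x r + 1 := load_update_target hxir
        have hκcomp : kappa B w r ≤ kappa B z' s := by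
          apply kappa_update_le hB
          · intro w' hw's
            rcases eq_or_ne w' r with rfl | hw'r
            · rw [hwr, load_update_of_ne hrs (by exact fun h => hxir h.symm)]
              omega
            · rcases eq_or_ne w' (x i) with rfl | hw'xi
              · have e1 := load_update_self hxis
                have e2 := load_update_self hxir
                rw [← hz'] at e1
                rw [← hw] at e2
                omega
              · rw [load_update_of_ne hw's hw'xi, load_update_of_ne hw'r hw'xi]
          · rw [hwr, hz's]
            omega
        have hdev := hx i r
        rw [pcost_update_eq, ← hw, hwr, hxis_aux, hcast] at hdev
        rw [hz's, hcast]
        have c5 : a r * (((load x r : ℕ) : ℝ) + 1) ≤ a r * (((load x s : ℕ) : ℝ) + 1) := by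
          apply mul_le_mul_of_nonneg_left _ (ha0 r)
          have : ((load x r : ℕ) : ℝ) ≤ ((load x s : ℕ) : ℝ) := by exact_mod_cast hl.le
          linarith
        have c6 : α * (a r * (((load x r : ℕ) : ℝ) + 1) + kappa B w r)
            ≤ α * (a r * (((load x s : ℕ) : ℝ) + 1) + kappa B z' s) :=
          mul_le_mul_of_nonneg_left (add_le_add c5 hκcomp) hα0
        linarith
    · by_cases hus : u = s
      · -- target u = s, i.e. deviation to resource r in the unswapped world
        rw [hus, Equiv.swap_apply_right] at htriv ⊢
        have hxir : x i ≠ r := Ne.symm htriv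
        set z' := Function.update x i r with hz'
        have hz'r : load z' r = load x r + 1 := load_update_target hxir
        have hdev := hx i r
        rw [pcost_update_eq, ← hz', hz'r, hxis_aux, hcast] at hdev
        rw [hz'r, hcast]
        have hσ : a (Equiv.swap r s (x i)) * ((load x (x i) : ℕ) : ℝ)
            ≤ a (x i) * ((load x (x i) : ℕ) : ℝ) := by
          rcases eq_or_ne (x i) s with hxis | hxis
          · rw [hxis, Equiv.swap_apply_right]
            exact mul_le_mul_of_nonneg_right hars (by positivity)
          · rw [Equiv.swap_apply_of_ne_of_ne hxir hxis]
        have c5 : a r * (((load x r : ℕ) : ℝ) + 1) ≤ a s * (((load x r : ℕ) : ℝ) + 1) :=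
          mul_le_mul_of_nonneg_right hars (by positivity)
        have c6 : α * (a r * (((load x r : ℕ) : ℝ) + 1) + kappa B z' r)
            ≤ α * (a s * (((load x r : ℕ) : ℝ) + 1) + kappa B z' r) :=
          mul_le_mul_of_nonneg_left (by linarith) hα0
        linarith
      · -- target u outside {r, s}
        have hswu : Equiv.swap r s u = u := Equiv.swap_apply_of_ne_of_ne hur hus
        rw [hswu] at htriv ⊢
        have hxiu : x i ≠ u := Ne.symm htriv
        set z' := Function.update x i u with hz'
        have hz'u : load z' u = load x u + 1 := load_update_target hxiu
        by_cases hxir : x i = r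
        · -- case A3 : the star inequality
          set zj' := Function.update x j u with hzj'
          have hstar := star_ineq x i j u r s hxir hxj hur hus hl hB hα1 hα2
          rw [← hzj', ← hz'] at hstar
          have hxju : x j ≠ u := by rw [hxj]; exact Ne.symm hus
          have hzj'u : load zj' u = load x u + 1 := load_update_target hxju
          have hdev := hx j u
          have hpj : pcost a B x j = a s * ((load x s : ℕ) : ℝ) + kappa B x s := by
            unfold pcost rcost
            rw [hxj]
          rw [pcost_update_eq, ← hzj', hzj'u, hpj, hcast] at hdev
          rw [hxir, Equiv.swap_apply_left, hκr, hz'u, hcast]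
          have c1 : a s * ((load x r : ℕ) : ℝ) ≤ a s * ((load x s : ℕ) : ℝ) :=
            mul_le_mul_of_nonneg_left (by exact_mod_cast hl.le) (ha0 s)
          have e1 : α * (a u * (((load x u : ℕ) : ℝ) + 1) + kappa B zj' u)
              = α * (a u * (((load x u : ℕ) : ℝ) + 1)) + α * kappa B zj' u := by ring
          have e2 : α * (a u * (((load x u : ℕ) : ℝ) + 1) + kappa B z' u)
              = α * (a u * (((load x u : ℕ) : ℝ) + 1)) + α * kappa B z' u := by ring
          linarith
        · -- cases B3 / C3 : direct
          have hσ : a (Equiv.swap r s (x i)) * ((load x (x i) : ℕ) : ℝ)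
              ≤ a (x i) * ((load x (x i) : ℕ) : ℝ) := by
            rcases eq_or_ne (x i) s with hxis | hxis
            · rw [hxis, Equiv.swap_apply_right]
              exact mul_le_mul_of_nonneg_right hars (by positivity)
            · rw [Equiv.swap_apply_of_ne_of_ne hxir hxis]
          have hdev := hx i u
          rw [pcost_update_eq, ← hz', hxis_aux] at hdev
          linarith

end Main

section Sorting
variable [Fintype ι] [DecidableEq ι] {B α : ℝ} {a : Fin m → ℝ}

lemma sum_comp_eq (x : ι → Fin m) (g : Fin m → ℕ) :
    ∑ i, g (x i) = ∑ t, load x t * g t := by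
  rw [← Finset.sum_fiberwise univ x (fun i => g (x i))]
  apply Finset.sum_congr rfl
  intro t _
  have h : ∀ i ∈ univ.filter (fun i => x i = t), g (x i) = g t := by
    intro i hi
    rw [(Finset.mem_filter.mp hi).2]
  rw [Finset.sum_congr rfl h, Finset.sum_const, smul_eq_mul]
  rfl

lemma measure_lt (x : ι → Fin m) (r s : Fin m) (hrs : r < s) (hl : load x r < load x s) :
    ∑ i, ((⇑(Equiv.swap r s) ∘ x) i).val < ∑ i, (x i).val := by
  have hrne : r ≠ s := ne_of_lt hrs
  have h1 : ∑ i, ((⇑(Equiv.swap r s) ∘ x) i).val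
      = ∑ t, load x t * (Equiv.swap r s t).val := by
    have := sum_comp_eq x (fun t => (Equiv.swap r s t).val)
    simpa using this
  have h2 : ∑ i, (x i).val = ∑ t, load x t * t.val := sum_comp_eq x (fun t => t.val)
  rw [h1, h2]
  have hsmem : s ∈ univ.erase r := Finset.mem_erase.mpr ⟨hrne.symm, mem_univ s⟩
  have esplit : ∀ F : Fin m → ℕ,
      ∑ t, F t = F r + (F s + ∑ t ∈ (univ.erase r).erase s, F t) := by
    intro F
    rw [← Finset.add_sum_erase _ F (mem_univ r), ← Finset.add_sum_erase _ F hsmem]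
  rw [esplit (fun t => load x t * (Equiv.swap r s t).val), esplit (fun t => load x t * t.val)]
  have hrest : ∑ t ∈ (univ.erase r).erase s, load x t * (Equiv.swap r s t).val
      = ∑ t ∈ (univ.erase r).erase s, load x t * t.val := by
    apply Finset.sum_congr rfl
    intro t ht
    have h1 := Finset.mem_erase.mp ht
    have h2 := Finset.mem_erase.mp h1.2
    rw [Equiv.swap_apply_of_ne_of_ne h2.1 h1.1]
  rw [hrest]
  simp only [Equiv.swap_apply_left, Equiv.swap_apply_right]
  have hv : r.val ≤ s.val := le_of_lt hrs
  have e1 : load x r * s.val = load x r * r.val + load x r * (s.val - r.val) := by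
    rw [← Nat.left_distrib, Nat.add_sub_cancel' hv]
  have e2 : load x s * s.val = load x s * r.val + load x s * (s.val - r.val) := by
    rw [← Nat.left_distrib, Nat.add_sub_cancel' hv]
  have key : load x r * (s.val - r.val) < load x s * (s.val - r.val) := by
    apply Nat.mul_lt_mul_of_lt_of_le hl (le_refl _)
    omega
  have hlt : load x r * s.val + load x s * r.val < load x r * r.val + load x s * s.val := by
    rw [e1, e2]
    linarith
  linarith

lemma sorted_exists (ha0 : ∀ t, 0 ≤ a t) (ha : Monotone a) (hB : 0 < B)
    (hα1 : 1 ≤ α) (hα2 : α ≤ 2) :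
    ∀ (k : ℕ) (x : ι → Fin m), (∑ i, (x i).val) ≤ k → isApproxPNE a B α x →
      ∃ x' : ι → Fin m, isApproxPNE a B α x' ∧
        ∀ r s : Fin m, r ≤ s → load x' s ≤ load x' r := by
  intro k
  induction k using Nat.strong_induction_on with
  | _ k ih =>
    intro x hk hx
    by_cases hsorted : ∀ r s : Fin m, r ≤ s → load x s ≤ load x r
    · exact ⟨x, hx, hsorted⟩
    · push_neg at hsorted
      obtain ⟨r, s, hle, hload⟩ := hsorted
      have hload' : load x r < load x s := by omega
      have hrlt : r < s := lt_of_le_of_ne hle (by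
        intro h
        rw [h] at hload'
        omega)
      have hPNE' := swap_isApproxPNE ha0 hB hα1 hα2 x hx r s (ha hle) hload'
      have hmeas := measure_lt x r s hrlt hload'
      have hkpos : 1 ≤ k := by omega
      exact ih (k - 1) (by omega) _ (by omega) hPNE'

end Sorting

/-- if an α-approximate PNE exists (1 ≤ α ≤ 2, coefficients ordered
increasingly), then one with nonincreasing loads exists. -/
theorem exists_decreasing_approx_PNE (n m : ℕ) (hn : 1 ≤ n) (hm : 1 ≤ m)
    (a : Fin m → ℝ) (ha0 : ∀ r, 0 ≤ a r) (ha : Monotone a)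
    (B : ℝ) (hB : 0 < B) (α : ℝ) (hα1 : 1 ≤ α) (hα2 : α ≤ 2)
    (h : ∃ y : Fin n → Fin m, isApproxPNE a B α y) :
    ∃ x : Fin n → Fin m, isApproxPNE a B α x ∧
      ∀ r s : Fin m, r ≤ s → load x s ≤ load x r := by
  obtain ⟨y, hy⟩ := h
  exact sorted_exists ha0 ha hB hα1 hα2 (∑ i, (y i).val) y (le_refl _) hy
end

section
/- Let a multi-leader congestion game with an adversary have its resources ordered so that a_1 ≤ a_2 ≤ … ≤ a_m, and let x be a strategy profile with nonincreasing loads ℓ_1(x) ≥ ℓ_2(x) ≥ … ≥ ℓ_m(x). Let i be a player and r a resource with ℓ_r(x) = ℓ_{x_i}(x) − 1. Then deviating to r does not improve player i's cost: π_i(x) ≤ π_i(r, x_{−i}). -/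
open Finset

variable {ι : Type*} {m : ℕ}

/-- deviating to a resource whose load is one less than that of
one's own resource does not improve the cost (ordered coefficients,
nonincreasing loads). -/
theorem no_improvement_load_minus_one (n m : ℕ) (a : Fin m → ℝ)
    (ha0 : ∀ r, 0 ≤ a r) (ha : Monotone a) (B : ℝ) (hB : 0 < B)
    (x : Fin n → Fin m) (hx : ∀ r s : Fin m, r ≤ s → load x s ≤ load x r)
    (i : Fin n) (r : Fin m) (hr : load x r + 1 = load x (x i)) :
    pcost a B x i ≤ pcost a B (Function.update x i r) i := by
  set s := x i with hs
  set y := Function.update x i r with hy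
  have hne : r ≠ s := by
    intro h; rw [h] at hr; omega
  have hsr : s < r := by
    by_contra h
    push_neg at h
    have := hx r s h
    omega
  have hiy : y i = r := Function.update_self i r x
  -- loads of y
  have hloadr : load y r = load x s := by
    have hset : univ.filter (fun j => y j = r) = insert i (univ.filter (fun j => x j = r)) := by
      ext j
      by_cases hj : j = i <;> simp [hy, Function.update, hj]
    have hnm : i ∉ univ.filter (fun j => x j = r) := by
      simp only [Finset.mem_filter, Finset.mem_univ, true_and, ← hs]
      exact Ne.symm hne
    rw [load, hset, Finset.card_insert_of_notMem hnm]
    show load x r + 1 = load x s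
    omega
  have hloads : load y s = load x r := by
    have hset : univ.filter (fun j => y j = s) = (univ.filter (fun j => x j = s)).erase i := by
      ext j
      by_cases hj : j = i <;> simp [hy, Function.update, hj, hne]
    have hm : i ∈ univ.filter (fun j => x j = s) := by simp [← hs]
    rw [load, hset, Finset.card_erase_of_mem hm]
    show load x s - 1 = load x r
    omega
  have hloadt : ∀ t, t ≠ r → t ≠ s → load y t = load x t := by
    intro t h1 h2
    have hset : univ.filter (fun j => y j = t) = univ.filter (fun j => x j = t) := by
      ext j
      by_cases hj : j = i <;>
        simp [hy, Function.update, hj, ← hs, Ne.symm h1, Ne.symm h2]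
    rw [load, hset]; rfl
  have hswap : ∀ t, load y t = load x (Equiv.swap r s t) := by
    intro t
    by_cases h1 : t = r
    · simp [h1, Equiv.swap_apply_left, hloadr]
    · by_cases h2 : t = s
      · simp [h2, Equiv.swap_apply_right, hloads]
      · rw [Equiv.swap_apply_of_ne_of_ne h1 h2, hloadt t h1 h2]
  have hmax : maxLoad y = maxLoad x := by
    apply le_antisymm
    · apply Finset.sup_le
      intro t _
      rw [hswap t]
      exact Finset.le_sup (Finset.mem_univ _)
    · apply Finset.sup_le
      intro t _
      have : load x t = load y (Equiv.swap r s t) := by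
        rw [hswap, Equiv.swap_apply_self]
      rw [this]
      exact Finset.le_sup (Finset.mem_univ _)
  have hnum : numMax y = numMax x := by
    unfold numMax
    apply Finset.card_bij' (fun t _ => Equiv.swap r s t) (fun t _ => Equiv.swap r s t)
    · intro t ht
      simp only [Finset.mem_filter, Finset.mem_univ, true_and] at ht ⊢
      rw [← hswap t, ht, hmax]
    · intro t ht
      simp only [Finset.mem_filter, Finset.mem_univ, true_and] at ht ⊢
      rw [hswap, Equiv.swap_apply_self, ht, hmax]
    · intro t _; exact Equiv.swap_apply_self _ _ t
    · intro t _; exact Equiv.swap_apply_self _ _ t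
  have hkappa : kappa B y r = kappa B x s := by
    unfold kappa
    rw [hloadr, hmax, hnum]
  have hy1 : pcost a B y i = a r * (load x s : ℝ) + kappa B x s := by
    rw [pcost, hiy, rcost, hloadr, hkappa]
  have hx1 : pcost a B x i = a s * (load x s : ℝ) + kappa B x s := rfl
  rw [hx1, hy1]
  have : a s ≤ a r := ha hsr.le
  have hnn : (0 : ℝ) ≤ (load x s : ℝ) := Nat.cast_nonneg _
  nlinarith
end

section
/- Let a multi-leader congestion game with an adversary have its resources ordered so that a_1 ≤ a_2 ≤ … ≤ a_m, and let x be a strategy profile with nonincreasing loads ℓ_1(x) ≥ ℓ_2(x) ≥ … ≥ ℓ_m(x). Let i be a player, s a resource with s ≠ x_i, and let x' = (s, x_{−i}) be the profile obtained after player i deviates from x_i to s. Let j be a player and r a resource such that r ≠ x_i, ℓ_r(x') = ℓ_{x_i}(x'), and x'_j ∉ {x_i, r}. Then deviating to x_i is at least as good for player j as deviating to r: π_j(x_i, x'_{−j}) ≤ π_j(r, x'_{−j}). -/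
open Finset

variable {ι : Type*} {m : ℕ}

/-- after player i deviates from x_i to s, any player j deviating
to a resource r whose load equals that of x_i weakly prefers x_i. -/
theorem prefer_vacated_resource (n m : ℕ) (a : Fin m → ℝ)
    (ha0 : ∀ r, 0 ≤ a r) (ha : Monotone a) (B : ℝ) (hB : 0 < B)
    (x : Fin n → Fin m) (hx : ∀ r s : Fin m, r ≤ s → load x s ≤ load x r)
    (i : Fin n) (s : Fin m) (hs : s ≠ x i)
    (j : Fin n) (r : Fin m) (hr : r ≠ x i)
    (hload : load (Function.update x i s) r = load (Function.update x i s) (x i))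
    (hj1 : Function.update x i s j ≠ x i) (hj2 : Function.update x i s j ≠ r) :
    pcost a B (Function.update (Function.update x i s) j (x i)) j ≤
      pcost a B (Function.update (Function.update x i s) j r) j := by
  classical
  have hir : x i ≠ r := Ne.symm hr
  -- generic load-of-update formula
  have key : ∀ (z : Fin n → Fin m) (k : Fin n) (t u : Fin m),
      load (Function.update z k t) u
        = (if t = u then 1 else 0)
          + ∑ p ∈ Finset.univ.erase k, (if z p = u then (1:ℕ) else 0) := by
    intro z k t u
    have h1 : load (Function.update z k t) u
        = ∑ p ∈ Finset.univ, (if Function.update z k t p = u then (1:ℕ) else 0) := by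
      rw [load, Finset.card_filter]
    rw [h1]
    have h2 : (fun p => if Function.update z k t p = u then (1:ℕ) else 0)
        = Function.update (fun p => if z p = u then (1:ℕ) else 0) k
            (if t = u then 1 else 0) := by
      funext p
      by_cases hp : p = k
      · subst hp; simp
      · simp [Function.update_of_ne hp]
    rw [h2, Finset.sum_update_of_mem (Finset.mem_univ k), ← Finset.erase_eq]
  have loadz : ∀ (z : Fin n → Fin m) (k : Fin n) (u : Fin m),
      load z u = (if z k = u then 1 else 0)
          + ∑ p ∈ Finset.univ.erase k, (if z p = u then (1:ℕ) else 0) := by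
    intro z k u
    have := key z k (z k) u
    rwa [Function.update_eq_self] at this
  -- a (x i) ≤ a r
  have hTr : (∑ p ∈ Finset.univ.erase i, (if x p = x i then (1:ℕ) else 0))
      = (if s = r then 1 else 0)
        + ∑ p ∈ Finset.univ.erase i, (if x p = r then (1:ℕ) else 0) := by
    have h1 := key x i s r
    have h2 := key x i s (x i)
    rw [h1, h2, if_neg hs, zero_add] at hload
    exact hload.symm
  have hlt : load x r < load x (x i) := by
    rw [loadz x i r, loadz x i (x i), if_neg hir, if_pos rfl, hTr]
    split_ifs <;> omega
  have hxile : x i ≤ r := by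
    by_contra h
    push_neg at h
    exact absurd (hx r (x i) h.le) (not_le.mpr hlt)
  have har : a (x i) ≤ a r := ha hxile
  -- contributions of players other than j coincide on x i and r
  have hSxr : (∑ p ∈ Finset.univ.erase j,
        (if Function.update x i s p = x i then (1:ℕ) else 0))
      = ∑ p ∈ Finset.univ.erase j, (if Function.update x i s p = r then (1:ℕ) else 0) := by
    have h1 := loadz (Function.update x i s) j r
    have h2 := loadz (Function.update x i s) j (x i)
    rw [h1, h2, if_neg hj1, if_neg hj2, zero_add, zero_add] at hload
    exact hload.symm
  have hload_eq : ∀ u, load (Function.update (Function.update x i s) j (x i)) u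
      = load (Function.update (Function.update x i s) j r) (Equiv.swap (x i) r u) := by
    intro u
    rcases eq_or_ne u (x i) with h | h1
    · subst h
      rw [Equiv.swap_apply_left, key, key, if_pos rfl, if_pos rfl, hSxr]
    rcases eq_or_ne u r with h | h2
    · subst h
      rw [Equiv.swap_apply_right, key, key, if_neg hir, if_neg hr, hSxr]
    · rw [Equiv.swap_apply_of_ne_of_ne h1 h2, key, key,
        if_neg (Ne.symm h1), if_neg (Ne.symm h2)]
  have hmax : maxLoad (Function.update (Function.update x i s) j (x i))
      = maxLoad (Function.update (Function.update x i s) j r) := by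
    rw [maxLoad, maxLoad]
    have h : (fun u => load (Function.update (Function.update x i s) j (x i)) u)
        = (load (Function.update (Function.update x i s) j r)) ∘ (Equiv.swap (x i) r) :=
      funext hload_eq
    rw [h, ← Finset.sup_image]
    congr 1
    exact Finset.image_univ_equiv _
  have hnum : numMax (Function.update (Function.update x i s) j (x i))
      = numMax (Function.update (Function.update x i s) j r) := by
    rw [numMax, numMax, hmax]
    apply Finset.card_bij' (fun u _ => Equiv.swap (x i) r u)
      (fun v _ => Equiv.swap (x i) r v)
    · intro u hu
      simp only [Finset.mem_filter, Finset.mem_univ, true_and] at hu ⊢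
      rw [← hload_eq u]; exact hu
    · intro v hv
      simp only [Finset.mem_filter, Finset.mem_univ, true_and] at hv ⊢
      rw [hload_eq, Equiv.swap_apply_self]; exact hv
    · intro u _; exact Equiv.swap_apply_self _ _ u
    · intro v _; exact Equiv.swap_apply_self _ _ v
  have hl : load (Function.update (Function.update x i s) j (x i)) (x i)
      = load (Function.update (Function.update x i s) j r) r := by
    have := hload_eq (x i)
    rwa [Equiv.swap_apply_left] at this
  have hk : kappa B (Function.update (Function.update x i s) j (x i)) (x i)
      = kappa B (Function.update (Function.update x i s) j r) r := by
    rw [kappa, kappa, hl, hmax, hnum]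
  simp only [pcost, rcost, Function.update_self]
  rw [hl, hk]
  exact add_le_add_left
    (mul_le_mul_of_nonneg_right har (Nat.cast_nonneg _)) _
end
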